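/- arXiv:2006.03372 — 2 statements merged into one kernel-verified Lean document; each statement's English description precedes it below -/
import Mathlib

section
/- Let G = (V,E) be a finite undirected simple graph, h a positive integer, v ∈ V, and u ∈ N_v^h(G) with s = dis_G(u,v) (so 1 ≤ s ≤ h). Then N_u^h(G) \ (N_v^{h-s}(G) ∪ {v}) ⊆ N_u^h(G(V \ {v})); that is, every vertex w ≠ v that lies in the h-hop neighborhood of u in G but not in the (h−s)-hop neighborhood of v in G still lies in the h-hop neighborhood of u after deleting v from G. -/
open SimpleGraph

variable {V : Type*} [Fintype V] [DecidableEq V]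

/-- The subgraph of `G` induced by the vertex set `S`, viewed as a graph on the
same vertex type (edges are exactly the edges of `G` with both endpoints in `S`). -/
def SimpleGraph.inducedOn (G : SimpleGraph V) (S : Set V) : SimpleGraph V where
  Adj x y := G.Adj x y ∧ x ∈ S ∧ y ∈ S
  symm := ⟨fun _ _ ⟨ha, hx, hy⟩ => ⟨ha.symm, hy, hx⟩⟩
  loopless := ⟨fun x ⟨ha, _, _⟩ => G.loopless.irrefl x ha⟩

/-- The `h`-hop neighborhood of `v` in `G`:
all vertices `u ≠ v` with `dis_G(v,u) ≤ h`. -/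
def SimpleGraph.hNbhd (G : SimpleGraph V) (h : ℕ) (v : V) : Set V :=
  {u | u ≠ v ∧ G.edist v u ≤ (h : ℕ∞)}

/-- The `h`-degree of `v` in `G`: the number of vertices in its `h`-hop neighborhood. -/
noncomputable def SimpleGraph.hDeg (G : SimpleGraph V) (h : ℕ) (v : V) : ℕ :=
  (G.hNbhd h v).ncard

/-!
If `v` lay on a shortest `u`–`w` walk of length at most `h`, that walk would split at `v` into
pieces of lengths at least `s = dis(u,v)` and `dis(v,w)`, forcing `dis(v,w) ≤ h - s`. So for `w`
outside `N_v^{h-s} ∪ {v}` a shortest `u`–`w` walk avoids `v` and survives the deletion of `v`.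
-/

namespace SimpleGraph

variable {V : Type*} {G : SimpleGraph V}

lemma edist_inducedOn_le_length {S : Set V} {u w : V} (p : G.Walk u w)
    (hp : ∀ x ∈ p.support, x ∈ S) : (G.inducedOn S).edist u w ≤ p.length := by
  have hedges : ∀ e ∈ p.edges, e ∈ (G.inducedOn S).edgeSet := by
    rintro ⟨x, y⟩ he
    exact ⟨p.edges_subset_edgeSet he, hp x (p.fst_mem_support_of_mem_edges he),
      hp y (p.snd_mem_support_of_mem_edges he)⟩
  simpa using edist_le (p.transfer _ hedges)

lemma Walk.edist_add_edist_le_length {u v w : V} (p : G.Walk u w) (hv : v ∈ p.support) :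
    G.edist u v + G.edist v w ≤ p.length := by
  obtain ⟨q, r, rfl⟩ := Walk.mem_support_iff_exists_append.mp hv
  rw [Walk.length_append, Nat.cast_add]
  exact add_le_add (edist_le q) (edist_le r)

end SimpleGraph

theorem stmt0_general (G : SimpleGraph V) (h : ℕ) (v u : V) (s : ℕ)
    (hs : G.edist u v = (s : ℕ∞)) :
    G.hNbhd h u \ (G.hNbhd (h - s) v ∪ {v}) ⊆ (G.inducedOn {v}ᶜ).hNbhd h u := by
  rintro w ⟨⟨hwu, hdist⟩, hfar⟩
  have hwv : w ≠ v := fun hwv => hfar (Or.inr hwv)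
  obtain ⟨p, hp⟩ := G.exists_walk_of_edist_ne_top (ne_top_of_le_ne_top (by simp) hdist)
  have hvp : v ∉ p.support := by
    intro hv
    have hsum : (s : ℕ∞) + G.edist v w ≤ h :=
      hs ▸ (p.edist_add_edist_le_length hv).trans (hp ▸ hdist)
    refine hfar (Or.inl ⟨hwv, ?_⟩)
    rw [ENat.natCast_sub]
    exact ENat.le_sub_of_add_le_left (ENat.coe_ne_top s) hsum
  have hsupp : ∀ x ∈ p.support, x ∈ ({v}ᶜ : Set V) := fun x hx =>
    Set.mem_compl_singleton_iff.mpr (ne_of_mem_of_not_mem hx hvp)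
  exact ⟨hwu, (SimpleGraph.edist_inducedOn_le_length p hsupp).trans (hp ▸ hdist)⟩

/-- Observation 1: for `u` in the `h`-hop neighborhood of `v` with `s = dis_G(u,v)`,
every vertex of `N_u^h(G)` outside `N_v^{h-s}(G) ∪ {v}` is still in the `h`-hop
neighborhood of `u` after deleting `v`. -/
theorem stmt0 (G : SimpleGraph V) (h : ℕ) (hpos : 0 < h) (v u : V) (s : ℕ)
    (hu : u ∈ G.hNbhd h v) (hs : G.edist u v = (s : ℕ∞)) :
    G.hNbhd h u \ (G.hNbhd (h - s) v ∪ {v}) ⊆ (G.inducedOn {v}ᶜ).hNbhd h u :=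
  stmt0_general G h v u s hs
end

section
/- Let G = (V,E) be a finite undirected simple graph and h, k positive integers. Call a subset S ⊆ V (k,h)-dense if every vertex v ∈ S satisfies d_v^h(G(S)) ≥ k. If S and T are both (k,h)-dense, then S ∪ T is (k,h)-dense. Consequently, there is a unique maximal (k,h)-dense subset of V (the (k,h)-core of G), namely the union of all (k,h)-dense subsets, and it contains every (k,h)-dense subset of V. -/
open SimpleGraph

variable {V : Type*} [Fintype V] [DecidableEq V]

/-- `S` is `(k,h)`-dense in `G` if every vertex of `S` has `h`-degree at least `k`
in the subgraph induced by `S`. -/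
def KHDense (G : SimpleGraph V) (h k : ℕ) (S : Set V) : Prop :=
  ∀ v ∈ S, k ≤ (G.inducedOn S).hDeg h v

/-! Enlarging the vertex set only adds edges to the induced graph, so distances shrink and
`h`-degrees grow: a vertex keeps its density witness inside any superset, in particular in
any union of dense sets. -/

namespace SimpleGraph

variable {α : Type*}

lemma inducedOn_mono (G : SimpleGraph α) : Monotone G.inducedOn :=
  fun _ _ hST _ _ ⟨hadj, hx, hy⟩ => ⟨hadj, hST hx, hST hy⟩

lemma hNbhd_mono {G G' : SimpleGraph α} (hle : G ≤ G') (h : ℕ) (v : α) :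
    G.hNbhd h v ⊆ G'.hNbhd h v :=
  fun _ ⟨hne, hdist⟩ => ⟨hne, (edist_anti hle).trans hdist⟩

lemma hDeg_mono [Finite α] {G G' : SimpleGraph α} (hle : G ≤ G') (h : ℕ) (v : α) :
    G.hDeg h v ≤ G'.hDeg h v :=
  Set.ncard_le_ncard (hNbhd_mono hle h v)

end SimpleGraph

section

variable {α : Type*} [Finite α] {G : SimpleGraph α} {h k : ℕ}

lemma KHDense.le_hDeg_of_subset {S T : Set α} (hS : KHDense G h k S) (hST : S ⊆ T)
    {v : α} (hv : v ∈ S) : k ≤ (G.inducedOn T).hDeg h v :=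
  (hS v hv).trans (hDeg_mono (G.inducedOn_mono hST) h v)

lemma KHDense.sUnion {𝒮 : Set (Set α)} (h𝒮 : ∀ S ∈ 𝒮, KHDense G h k S) :
    KHDense G h k (⋃₀ 𝒮) := by
  rintro v ⟨S, hS𝒮, hvS⟩
  exact (h𝒮 S hS𝒮).le_hDeg_of_subset (Set.subset_sUnion_of_mem hS𝒮) hvS

lemma KHDense.union {S T : Set α} (hS : KHDense G h k S) (hT : KHDense G h k T) :
    KHDense G h k (S ∪ T) := by
  rw [← Set.sUnion_pair]
  exact KHDense.sUnion (by simp [hS, hT])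

end

theorem stmt11_general (G : SimpleGraph V) (h k : ℕ) :
    (∀ S T : Set V, KHDense G h k S → KHDense G h k T → KHDense G h k (S ∪ T)) ∧
    KHDense G h k (⋃₀ {S : Set V | KHDense G h k S}) ∧
    (∀ S : Set V, KHDense G h k S → S ⊆ ⋃₀ {S : Set V | KHDense G h k S}) :=
  ⟨fun _ _ => KHDense.union, KHDense.sUnion fun _ => id, fun _ hS => Set.subset_sUnion_of_mem hS⟩

/-- The union of two `(k,h)`-dense sets is `(k,h)`-dense; consequently the union of
all `(k,h)`-dense subsets is the unique maximal `(k,h)`-dense subset (the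
`(k,h)`-core), and it contains every `(k,h)`-dense subset. -/
theorem stmt11 (G : SimpleGraph V) (h k : ℕ) (hpos : 0 < h) (hk : 0 < k) :
    (∀ S T : Set V, KHDense G h k S → KHDense G h k T → KHDense G h k (S ∪ T)) ∧
    KHDense G h k (⋃₀ {S : Set V | KHDense G h k S}) ∧
    (∀ S : Set V, KHDense G h k S → S ⊆ ⋃₀ {S : Set V | KHDense G h k S}) :=
  stmt11_general G h k
end
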